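/- arXiv:2308.09703 — 2 statements merged into one kernel-verified Lean document; each statement's English description precedes it below -/
import Mathlib

section
/- Let G be a chordal graph, let X ⊆ V(G) be a clique, and let L₁, …, L_t be the evaporation sequence of G with exception set X. For i ∈ {1,…,t} let G_i denote the induced subgraph G − (L₁ ∪ … ∪ L_{i−1}). If G − X is connected, then G_i − X is connected for all i ∈ {1,…,t}. -/
/-- A graph is chordal if it contains no induced cycle of length at least 4. -/
def IsChordal {V : Type*} (G : SimpleGraph V) : Prop :=
  ∀ n : ℕ, 4 ≤ n → IsEmpty (SimpleGraph.cycleGraph n ↪g G)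

/-- The neighborhood of `v` inside the induced subgraph of `G` on the vertex set `R`. -/
def nbhdIn {V : Type*} (G : SimpleGraph V) (R : Set V) (v : V) : Set V :=
  {u | u ∈ R ∧ G.Adj u v}

/-- `v` is simplicial in the induced subgraph of `G` on `R`:
its neighborhood there is a clique. -/
def SimplicialIn {V : Type*} (G : SimpleGraph V) (R : Set V) (v : V) : Prop :=
  G.IsClique (nbhdIn G R v)

/-- The set of vertices remaining after `n` steps of the evaporation process of `G` with
exception set `X`: at each step all simplicial vertices of the current induced subgraph that
are not in `X` are removed. -/
def evapR {V : Type*} (G : SimpleGraph V) (X : Set V) : ℕ → Set V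
  | 0 => Set.univ
  | n + 1 =>
      evapR G X n \ {v | v ∈ evapR G X n ∧ v ∉ X ∧ SimplicialIn G (evapR G X n) v}

/-- The `i`-th set `L_i` of the evaporation sequence (for `i ≥ 1`): the vertices removed at
step `i` of the evaporation process. -/
def evapLayer {V : Type*} (G : SimpleGraph V) (X : Set V) (i : ℕ) : Set V :=
  evapR G X (i - 1) \ evapR G X i

/-- The evaporation time of `G` with exception set `X`: the length `t` of the evaporation
sequence, i.e. the least `t` with `evapR G X t = X`. -/
noncomputable def evapTime {V : Type*} (G : SimpleGraph V) (X : Set V) : ℕ :=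
  sInf {t | evapR G X t = X}

/-- The evaporation time of a vertex subset `S`: the largest index `i` such that
`L_i ∩ S ≠ ∅`. -/
noncomputable def evapTimeOf {V : Type*} (G : SimpleGraph V) (X S : Set V) : ℕ :=
  sSup {i | (evapLayer G X i ∩ S).Nonempty}

/-- `C` is a connected component of the induced subgraph of `G` on `S`:
a maximal subset of `S` inducing a connected subgraph. -/
def IsCompOf {V : Type*} (G : SimpleGraph V) (S C : Set V) : Prop :=
  C.Nonempty ∧ C ⊆ S ∧ (G.induce C).Connected ∧
    ∀ D, C ⊆ D → D ⊆ S → (G.induce D).Connected → D = C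

/-- The open neighborhood `N(S)` of a set of vertices. -/
def setNbhd {V : Type*} (G : SimpleGraph V) (S : Set V) : Set V :=
  {v | v ∉ S ∧ ∃ u ∈ S, G.Adj u v}

/-!
If `G[S]` is connected and every vertex of `S \ T` is simplicial in `G[S]`, then `G[T]` is
connected (when nonempty): the vertices of `S` that are reachable from a fixed `x` inside `G[T]`,
or lie outside `T` next to such a vertex, are closed under adjacency in `G[S]`, because two
neighbours of a simplicial vertex are adjacent. Each evaporation step removes only vertices that
are simplicial in the current graph, and `G_i − X` is nonempty for `i ≤ t`.
-/
open SimpleGraph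

section

variable {V : Type*} {G : SimpleGraph V}

lemma SimplicialIn.mono {R R' : Set V} {v : V} (hR : R' ⊆ R) (h : SimplicialIn G R v) :
    SimplicialIn G R' v :=
  IsClique.subset (fun _ hu => ⟨hR hu.1, hu.2⟩ : nbhdIn G R' v ⊆ nbhdIn G R v) h

theorem SimpleGraph.Preconnected.induce_of_simplicialIn_sdiff {S T : Set V} (hTS : T ⊆ S)
    (hS : (G.induce S).Preconnected) (hsimp : ∀ u ∈ S \ T, SimplicialIn G S u) :
    (G.induce T).Preconnected := by
  rintro ⟨x, hx⟩ ⟨y, hy⟩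
  let C : Set V := {v | ∃ hv : v ∈ T, (G.induce T).Reachable ⟨x, hx⟩ ⟨v, hv⟩}
  let P : V → Prop := fun v => v ∈ C ∨ (v ∉ T ∧ ∃ c ∈ C, G.Adj c v)
  have step : ∀ c ∈ C, ∀ b, G.Adj c b → P b := by
    rintro c ⟨hc, hxc⟩ b hcb
    by_cases hb : b ∈ T
    · exact Or.inl (show b ∈ C from ⟨hb, hxc.trans (Adj.reachable (G := G.induce T) hcb)⟩)
    · exact Or.inr ⟨hb, c, ⟨hc, hxc⟩, hcb⟩
  have hP : ∀ v : S, P v := by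
    intro v
    induction (reachable_iff_reflTransGen _ _).mp (hS ⟨x, hTS hx⟩ v) with
    | refl => exact Or.inl (show x ∈ C from ⟨hx, .rfl⟩)
    | @tail a b _ hab ha =>
      rcases ha with ha | ⟨haT, c, hc, hca⟩
      · exact step a ha b hab
      · by_cases hcb : c = b.1
        · exact hcb ▸ Or.inl hc
        · exact step c hc b (hsimp a ⟨a.2, haT⟩ ⟨hTS hc.1, hca⟩ ⟨b.2, hab.symm⟩ hcb)
  rcases hP ⟨y, hTS hy⟩ with ⟨_, hxy⟩ | ⟨hyT, _⟩
  · exact hxy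
  · exact absurd hy hyT

lemma subset_evapR (X : Set V) (n : ℕ) : X ⊆ evapR G X n := by
  induction n with
  | zero => exact Set.subset_univ X
  | succ n ih => exact fun x hx => ⟨ih hx, fun h => h.2.1 hx⟩

lemma simplicialIn_of_mem_evapR_of_notMem_evapR_succ {X : Set V} {n : ℕ} {u : V}
    (hu : u ∈ evapR G X n \ X) (hu' : u ∉ evapR G X (n + 1)) :
    SimplicialIn G (evapR G X n) u := by
  by_contra h
  exact hu' ⟨hu.1, fun h' => h h'.2.2⟩

lemma preconnected_induce_evapR_sdiff {X : Set V} (hconn : (G.induce Xᶜ).Preconnected)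
    (n : ℕ) : (G.induce (evapR G X n \ X)).Preconnected := by
  induction n with
  | zero => rwa [evapR, ← Set.compl_eq_univ_sdiff]
  | succ n ih =>
    refine ih.induce_of_simplicialIn_sdiff (Set.sdiff_subset_sdiff_left Set.sdiff_subset) ?_
    rintro u ⟨hu, hu'⟩
    exact (simplicialIn_of_mem_evapR_of_notMem_evapR_succ hu fun h => hu' ⟨h, hu.2⟩).mono
      Set.sdiff_subset

lemma evapR_sdiff_nonempty_of_lt_evapTime {X : Set V} {n : ℕ} (hn : n < evapTime G X) :
    (evapR G X n \ X).Nonempty := by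
  by_contra h
  have hX : evapR G X n = X :=
    (Set.sdiff_eq_empty.mp (Set.not_nonempty_iff_eq_empty.mp h)).antisymm (subset_evapR X n)
  exact (Nat.sInf_le hX).not_gt hn

end

theorem evapR_sdiff_connected_general {V : Type*} (G : SimpleGraph V) (X : Set V)
    (hconn : (G.induce Xᶜ).Connected) :
    ∀ i, 1 ≤ i → i ≤ evapTime G X → (G.induce (evapR G X (i - 1) \ X)).Connected := by
  intro i hi hit
  have hne : (evapR G X (i - 1) \ X).Nonempty := evapR_sdiff_nonempty_of_lt_evapTime (by omega)
  have := hne.to_subtype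
  exact ⟨preconnected_induce_evapR_sdiff hconn.preconnected (i - 1)⟩

/-- Let `G` be chordal, `X` a clique, `L₁, …, L_t` the evaporation sequence
of `G` with exception set `X`, and `G_i = G − (L₁ ∪ ⋯ ∪ L_{i-1})`. If `G − X` is connected,
then `G_i − X` is connected for all `i ∈ {1,…,t}`. -/
theorem evapR_sdiff_connected {V : Type*} [Fintype V] (G : SimpleGraph V) (X : Set V)
    (hch : IsChordal G) (hX : G.IsClique X) (hconn : (G.induce Xᶜ).Connected) :
    ∀ i, 1 ≤ i → i ≤ evapTime G X → (G.induce (evapR G X (i - 1) \ X)).Connected :=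
  evapR_sdiff_connected_general G X hconn
end

section
/- Let n be a positive integer. The number of split graphs with vertex set {1,…,n} whose questioning set Q has size at least 2 is equal to 2 · ∑_{q=2}^{n} ∑_{c=0}^{n−q} C(n,q) · C(n−q,c) · (2^{n−c−q} − 1)^c, where C(·,·) denotes the binomial coefficient and the convention 0^0 = 1 is used (so the term with q = n and c = 0 equals 1). -/
/-- A set of vertices is independent if no two of its members are adjacent. -/
def IsIndep {V : Type*} (G : SimpleGraph V) (s : Set V) : Prop :=
  s.Pairwise fun u v => ¬ G.Adj u v

/-- `(C, I)` is a split partition of `G`: `C` and `I` are disjoint, cover all vertices,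
`C` is a clique and `I` is an independent set (empty parts are allowed). -/
def IsSplitPartition {V : Type*} (G : SimpleGraph V) (C I : Set V) : Prop :=
  Disjoint C I ∧ C ∪ I = Set.univ ∧ G.IsClique C ∧ IsIndep G I

/-- A split graph: the vertex set can be partitioned into a clique and an independent set. -/
def IsSplit {V : Type*} (G : SimpleGraph V) : Prop :=
  ∃ C I : Set V, IsSplitPartition G C I

/-- The always-clique set: vertices belonging to the clique part of every split partition. -/
def alwaysClique {V : Type*} (G : SimpleGraph V) : Set V :=
  {v | ∀ C I : Set V, IsSplitPartition G C I → v ∈ C}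

/-- The always-independent set: vertices belonging to the independent part of every
split partition. -/
def alwaysIndep {V : Type*} (G : SimpleGraph V) : Set V :=
  {v | ∀ C I : Set V, IsSplitPartition G C I → v ∈ I}

/-- The questioning set: vertices placed in the clique part by some split partition and
in the independent part by some (other) split partition. -/
def questioning {V : Type*} (G : SimpleGraph V) : Set V :=
  {v | (∃ C I : Set V, IsSplitPartition G C I ∧ v ∈ C) ∧
       (∃ C I : Set V, IsSplitPartition G C I ∧ v ∈ I)}

/-!
Complementation swaps the two parts of every split partition, so it preserves split graphs and
their questioning sets. The questioning set `Q` of a graph is always a clique or an independent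
set, and not both once `|Q| ≥ 2`; hence the count is twice the number of split graphs whose
questioning set is a clique with at least two vertices.

For such a graph, with `A` its always-clique and `B` its always-independent vertices, `(Q ∪ A, B)`
is a split partition, `Q` has no neighbour in `B`, and each `a ∈ A` has a neighbour in `B`
(otherwise `a` could be moved to the independent part). Conversely, `Q` with `|Q| ≥ 2`, `A ⊆ Qᶜ`
and nonempty sets `f a ⊆ (Q ∪ A)ᶜ` for `a ∈ A` determine such a graph whose questioning and
always-clique sets are `Q` and `A`. With `|Q| = q` and `|A| = c` there are
`C(n, q) · C(n - q, c) · (2 ^ (n - q - c) - 1) ^ c` such choices.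
-/

open Finset

variable {V : Type*} {G : SimpleGraph V}

namespace IsSplitPartition

variable {C I C' I' : Set V}

lemma isClique (h : IsSplitPartition G C I) : G.IsClique C := h.2.2.1

lemma isIndep (h : IsSplitPartition G C I) : IsIndep G I := h.2.2.2

lemma isCompl (h : IsSplitPartition G C I) : IsCompl C I :=
  ⟨h.1, codisjoint_iff.2 h.2.1⟩

lemma mem_or_mem (h : IsSplitPartition G C I) (v : V) : v ∈ C ∨ v ∈ I :=
  show v ∈ C ∪ I from h.2.1 ▸ Set.mem_univ v

lemma notMem_indep (h : IsSplitPartition G C I) {v : V} (hv : v ∈ C) : v ∉ I :=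
  Set.disjoint_left.1 h.1 hv

lemma mem_indep_of_notMem (h : IsSplitPartition G C I) {v : V} (hv : v ∉ C) : v ∈ I :=
  (h.mem_or_mem v).resolve_left hv

lemma mem_clique_of_notMem (h : IsSplitPartition G C I) {v : V} (hv : v ∉ I) : v ∈ C :=
  (h.mem_or_mem v).resolve_right hv

lemma compl_iff : IsSplitPartition Gᶜ C I ↔ IsSplitPartition G I C := by
  simp only [IsSplitPartition, IsIndep, ← SimpleGraph.isIndepSet_iff,
    SimpleGraph.isClique_compl, SimpleGraph.isIndepSet_compl, disjoint_comm, Set.union_comm]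
  tauto

lemma diff_subsingleton (h : IsSplitPartition G C I) (h' : IsSplitPartition G C' I') :
    (C \ C').Subsingleton := by
  intro a ha b hb
  by_contra hab
  exact h'.isIndep (h'.mem_indep_of_notMem ha.2) (h'.mem_indep_of_notMem hb.2) hab
    (h.isClique ha.1 hb.1 hab)

lemma insert_clique (h : IsSplitPartition G C I) {v : V} (hv : ∀ w ∈ C, v ≠ w → G.Adj v w) :
    IsSplitPartition G (insert v C) (I \ {v}) := by
  refine ⟨?_, ?_, h.isClique.insert hv, h.isIndep.mono Set.sdiff_subset⟩
  · rw [Set.disjoint_left]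
    rintro w (rfl | hw) hw'
    exacts [hw'.2 rfl, h.notMem_indep hw hw'.1]
  · refine Set.eq_univ_of_forall fun w => ?_
    by_cases hwv : w = v
    · exact Or.inl (Or.inl hwv)
    · exact (h.mem_or_mem w).imp Or.inr fun hw => ⟨hw, hwv⟩

lemma insert_indep (h : IsSplitPartition G C I) {v : V} (hv : ∀ w ∈ I, ¬ G.Adj v w) :
    IsSplitPartition G (C \ {v}) (insert v I) :=
  compl_iff.1 <| (compl_iff.2 h).insert_clique fun w hw hvw => ⟨hvw, hv w hw⟩

lemma graph_eq {G' : SimpleGraph V} (h : IsSplitPartition G C I) (h' : IsSplitPartition G' C I)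
    (hCI : ∀ u ∈ C, ∀ v ∈ I, G.Adj u v ↔ G'.Adj u v) : G = G' := by
  ext u v
  rcases h.mem_or_mem u with hu | hu <;> rcases h.mem_or_mem v with hv | hv
  · by_cases huv : u = v
    · simp [huv]
    · exact iff_of_true (h.isClique hu hv huv) (h'.isClique hu hv huv)
  · exact hCI u hu v hv
  · rw [G.adj_comm, G'.adj_comm]
    exact hCI v hv u hu
  · by_cases huv : u = v
    · simp [huv]
    · exact iff_of_false (h.isIndep hu hv huv) (h'.isIndep hu hv huv)

end IsSplitPartition

lemma questioning_compl : questioning Gᶜ = questioning G := by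
  ext v
  simp only [questioning, Set.mem_ofPred_eq, IsSplitPartition.compl_iff]
  constructor <;>
    exact fun ⟨⟨C, I, h, hv⟩, ⟨C', I', h', hv'⟩⟩ => ⟨⟨I', C', h', hv'⟩, ⟨I, C, h, hv⟩⟩

lemma isSplit_compl : IsSplit Gᶜ ↔ IsSplit G := by
  simp only [IsSplit, IsSplitPartition.compl_iff]
  exact exists_comm

lemma exists_isSplitPartition_mem_clique_of_adj {x y : V} (hx : x ∈ questioning G)
    (hy : y ∈ questioning G) (hxy : G.Adj x y) :
    ∃ C I, IsSplitPartition G C I ∧ x ∈ C ∧ y ∈ C := by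
  obtain ⟨C, I, h, hxC⟩ := hx.1
  obtain ⟨C', I', h', hyC'⟩ := hy.1
  by_cases hxC' : x ∈ C'
  · exact ⟨C', I', h', hxC', hyC'⟩
  -- `C \ C'` already contains `x`, so every other vertex of `C` lies in `C'` and is adjacent to `y`
  refine ⟨_, _, h.insert_clique (v := y) fun w hw hyw => ?_, Or.inr hxC, Or.inl rfl⟩
  by_cases hwx : w = x
  · exact hwx ▸ hxy.symm
  · refine h'.isClique hyC' (by_contra fun hwC' => hwx ?_) hyw
    exact h.diff_subsingleton h' ⟨hw, hwC'⟩ ⟨hxC, hxC'⟩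

lemma adj_of_adj_of_mem_questioning {x y z : V} (hx : x ∈ questioning G)
    (hy : y ∈ questioning G) (hz : z ∈ questioning G) (hxz : x ≠ z) (hxy : G.Adj x y) :
    G.Adj x z := by
  rcases eq_or_ne y z with rfl | hyz
  · exact hxy
  by_contra hnxz
  obtain ⟨C, I, h, hxC, hyC⟩ := exists_isSplitPartition_mem_clique_of_adj hx hy hxy
  obtain ⟨C', I', h', hzC'⟩ := hz.1
  have hxC' : x ∉ C' := fun hxC' => hnxz (h'.isClique hxC' hzC' hxz)
  have hyC' : y ∈ C' :=
    by_contra fun hyC' => hxy.ne (h.diff_subsingleton h' ⟨hxC, hxC'⟩ ⟨hyC, hyC'⟩)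
  obtain ⟨C'', I'', h'', hyI''⟩ := hy.2
  have hxC'' := h''.mem_clique_of_notMem fun hxI'' => h''.isIndep hxI'' hyI'' hxy.ne hxy
  have hzC'' := h''.mem_clique_of_notMem fun hzI'' =>
    h''.isIndep hyI'' hzI'' hyz (h'.isClique hyC' hzC' hyz)
  exact hnxz (h''.isClique hxC'' hzC'' hxz)

theorem isClique_or_isIndep_questioning (G : SimpleGraph V) :
    G.IsClique (questioning G) ∨ IsIndep G (questioning G) := by
  refine or_iff_not_imp_right.2 fun hQ => ?_
  obtain ⟨x, hx, y, hy, -, hxy⟩ :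
      ∃ x ∈ questioning G, ∃ y ∈ questioning G, x ≠ y ∧ G.Adj x y := by
    simpa [IsIndep, Set.Pairwise] using hQ
  have hxQ : ∀ w ∈ questioning G, x ≠ w → G.Adj x w := fun w hw hxw =>
    adj_of_adj_of_mem_questioning hx hy hw hxw hxy
  intro z hz w hw hzw
  rcases eq_or_ne z x with rfl | hzx
  · exact hxQ w hw hzw
  · exact adj_of_adj_of_mem_questioning hz hx hw hzw (hxQ z hz hzx.symm).symm

lemma mem_questioning_or_alwaysClique_or_alwaysIndep (v : V) :
    v ∈ questioning G ∨ v ∈ alwaysClique G ∨ v ∈ alwaysIndep G := by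
  by_cases hA : v ∈ alwaysClique G
  · exact Or.inr (Or.inl hA)
  by_cases hB : v ∈ alwaysIndep G
  · exact Or.inr (Or.inr hB)
  simp only [alwaysClique, alwaysIndep, Set.mem_ofPred_eq, not_forall] at hA hB
  obtain ⟨C, I, h, hvC⟩ := hA
  obtain ⟨C', I', h', hvI'⟩ := hB
  exact Or.inl ⟨⟨C', I', h', h'.mem_clique_of_notMem hvI'⟩, ⟨C, I, h, h.mem_indep_of_notMem hvC⟩⟩

lemma notMem_alwaysClique_of_mem_questioning {v : V} (hv : v ∈ questioning G) :
    v ∉ alwaysClique G :=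
  fun hA => have ⟨C, I, h, hvI⟩ := hv.2; h.notMem_indep (hA C I h) hvI

lemma notMem_alwaysIndep_of_mem_questioning {v : V} (hv : v ∈ questioning G) :
    v ∉ alwaysIndep G :=
  fun hB => have ⟨C, I, h, hvC⟩ := hv.1; h.notMem_indep hvC (hB C I h)

lemma notMem_alwaysIndep_of_mem_alwaysClique (hG : IsSplit G) {v : V}
    (hv : v ∈ alwaysClique G) : v ∉ alwaysIndep G :=
  fun hB => have ⟨C, I, h⟩ := hG; h.notMem_indep (hv C I h) (hB C I h)

lemma not_adj_of_mem_questioning_of_mem_alwaysIndep {x b : V} (hx : x ∈ questioning G)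
    (hb : b ∈ alwaysIndep G) : ¬ G.Adj x b := by
  obtain ⟨C, I, h, hxI⟩ := hx.2
  exact h.isIndep hxI (hb C I h) fun hxb => notMem_alwaysIndep_of_mem_questioning hx (hxb ▸ hb)

lemma isSplitPartition_questioning_union_alwaysClique (hG : IsSplit G)
    (hQ : G.IsClique (questioning G)) :
    IsSplitPartition G (questioning G ∪ alwaysClique G) (alwaysIndep G) := by
  obtain ⟨C, I, h⟩ := id hG
  refine ⟨Set.disjoint_union_left.2
      ⟨Set.disjoint_left.2 fun _ => ?_, Set.disjoint_left.2 fun _ => ?_⟩,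
    Set.eq_univ_of_forall fun v => ?_, ?_, h.isIndep.mono fun b hb => hb C I h⟩
  · exact notMem_alwaysIndep_of_mem_questioning
  · exact notMem_alwaysIndep_of_mem_alwaysClique hG
  · rcases mem_questioning_or_alwaysClique_or_alwaysIndep (G := G) v with hv | hv | hv <;>
      simp [hv]
  · refine Set.pairwise_union.2
      ⟨hQ, h.isClique.subset fun a ha => ha C I h, fun x hx a ha hxa => ?_⟩
    obtain ⟨C', I', h', hxC'⟩ := hx.1
    have hxa := h'.isClique hxC' (ha C' I' h') hxa
    exact ⟨hxa, hxa.symm⟩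

lemma exists_adj_mem_alwaysIndep (hG : IsSplit G) (hQ : G.IsClique (questioning G)) {a : V}
    (ha : a ∈ alwaysClique G) : ∃ b ∈ alwaysIndep G, G.Adj a b := by
  by_contra! hB
  exact (ha _ _ ((isSplitPartition_questioning_union_alwaysClique hG hQ).insert_indep hB)).2 rfl

section SplitData

variable [DecidableEq V] {Q A : Finset V} {f : V → Finset V}

/-- The split graph with clique `Q ∪ A` and independent set `(Q ∪ A)ᶜ`, in which each `a ∈ A` is
joined to the vertices of `f a`. -/
def splitGraph (Q A : Finset V) (f : V → Finset V) : SimpleGraph V :=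
  SimpleGraph.fromRel fun u v => (u ∈ Q ∪ A ∧ v ∈ Q ∪ A) ∨ (u ∈ A ∧ v ∈ f u)

structure IsSplitData (Q A : Finset V) (f : V → Finset V) : Prop where
  two_le_card : 2 ≤ #Q
  disjoint : Disjoint Q A
  disjoint_union : ∀ a ∈ A, Disjoint (f a) (Q ∪ A)
  nonempty : ∀ a ∈ A, (f a).Nonempty
  eq_empty : ∀ v ∉ A, f v = ∅

lemma splitGraph_adj_of_mem_union {u v : V} (hu : u ∈ Q ∪ A) (hv : v ∈ Q ∪ A) (huv : u ≠ v) :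
    (splitGraph Q A f).Adj u v :=
  (SimpleGraph.fromRel_adj _ _ _).2 ⟨huv, Or.inl (Or.inl ⟨hu, hv⟩)⟩

lemma splitGraph_adj_of_notMem {u v : V} (hv : v ∉ Q ∪ A) :
    (splitGraph Q A f).Adj u v ↔ u ∈ A ∧ v ∈ f u := by
  simp only [mem_union, not_or] at hv
  simp only [splitGraph, SimpleGraph.fromRel_adj, mem_union, hv]
  exact ⟨by tauto, fun huv => ⟨fun h => hv.2 (h ▸ huv.1), by tauto⟩⟩

lemma isSplitPartition_splitGraph :
    IsSplitPartition (splitGraph Q A f) ↑(Q ∪ A) (↑(Q ∪ A))ᶜ :=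
  ⟨disjoint_compl_right, Set.union_compl_self _,
    fun _ hu _ hv huv => splitGraph_adj_of_mem_union hu hv huv,
    fun _ hu _ hv _ huv => hu (mem_union_right Q ((splitGraph_adj_of_notMem hv).1 huv).1)⟩

namespace IsSplitData

lemma mem_indep_of_notMem (hd : IsSplitData Q A f) {C I : Set V}
    (h : IsSplitPartition (splitGraph Q A f) C I) {b : V} (hb : b ∉ Q ∪ A) : b ∈ I := by
  obtain ⟨x, hxQ, y, hyQ, hxy⟩ := one_lt_card.1 hd.two_le_card
  refine h.mem_indep_of_notMem fun hbC => ?_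
  obtain ⟨z, hzQ, hzC⟩ : ∃ z ∈ Q, z ∈ C := by
    by_contra! hQI
    exact h.isIndep (h.mem_indep_of_notMem (hQI x hxQ)) (h.mem_indep_of_notMem (hQI y hyQ)) hxy
      (splitGraph_adj_of_mem_union (mem_union_left A hxQ) (mem_union_left A hyQ) hxy)
  have hzb : z ≠ b := fun hzb => hb (mem_union_left A (hzb ▸ hzQ))
  exact disjoint_left.1 hd.disjoint hzQ
    ((splitGraph_adj_of_notMem hb).1 (h.isClique hzC hbC hzb)).1

lemma mem_clique_of_mem (hd : IsSplitData Q A f) {C I : Set V}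
    (h : IsSplitPartition (splitGraph Q A f) C I) {a : V} (ha : a ∈ A) : a ∈ C := by
  refine h.mem_clique_of_notMem fun haI => ?_
  obtain ⟨b, hb⟩ := hd.nonempty a ha
  have hbQA : b ∉ Q ∪ A := disjoint_left.1 (hd.disjoint_union a ha) hb
  exact h.isIndep haI (hd.mem_indep_of_notMem h hbQA)
    (fun hab => hbQA (mem_union_right Q (hab ▸ ha))) ((splitGraph_adj_of_notMem hbQA).2 ⟨ha, hb⟩)

lemma questioning_splitGraph (hd : IsSplitData Q A f) :
    questioning (splitGraph Q A f) = ↑Q := by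
  ext x
  constructor
  · rintro ⟨⟨C, I, h, hxC⟩, ⟨C', I', h', hxI'⟩⟩
    have hxQA : x ∈ Q ∪ A :=
      by_contra fun hx => h.notMem_indep hxC (hd.mem_indep_of_notMem h hx)
    exact (mem_union.1 hxQA).resolve_right fun hxA =>
      h'.notMem_indep (hd.mem_clique_of_mem h' hxA) hxI'
  · intro hxQ
    refine ⟨⟨_, _, isSplitPartition_splitGraph, mem_union_left A hxQ⟩,
      ⟨_, _, isSplitPartition_splitGraph.insert_indep fun b hb hxb => ?_, Or.inl rfl⟩⟩
    exact disjoint_left.1 hd.disjoint hxQ ((splitGraph_adj_of_notMem hb).1 hxb).1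

lemma alwaysClique_splitGraph (hd : IsSplitData Q A f) :
    alwaysClique (splitGraph Q A f) = ↑A := by
  ext a
  refine ⟨fun ha => ?_, fun ha C I h => hd.mem_clique_of_mem h ha⟩
  refine (mem_union.1 (ha _ _ isSplitPartition_splitGraph)).resolve_left fun haQ => ?_
  exact notMem_alwaysClique_of_mem_questioning (hd.questioning_splitGraph ▸ haQ) ha

lemma mem_iff_adj (hd : IsSplitData Q A f) {a b : V} (ha : a ∈ A) :
    b ∈ f a ↔ (splitGraph Q A f).Adj a b ∧ b ∉ Q ∪ A := by
  refine ⟨fun hb => ?_, fun ⟨hab, hb⟩ => ((splitGraph_adj_of_notMem hb).1 hab).2⟩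
  have hbQA : b ∉ Q ∪ A := disjoint_left.1 (hd.disjoint_union a ha) hb
  exact ⟨(splitGraph_adj_of_notMem hbQA).2 ⟨ha, hb⟩, hbQA⟩

lemma eq_of_splitGraph_eq {Q' A' : Finset V} {f' : V → Finset V} (hd : IsSplitData Q A f)
    (hd' : IsSplitData Q' A' f') (h : splitGraph Q A f = splitGraph Q' A' f') :
    Q = Q' ∧ A = A' ∧ f = f' := by
  have hQ : Q = Q' := coe_injective <| by
    rw [← hd.questioning_splitGraph, ← hd'.questioning_splitGraph, h]
  have hA : A = A' := coe_injective <| by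
    rw [← hd.alwaysClique_splitGraph, ← hd'.alwaysClique_splitGraph, h]
  subst hQ hA
  refine ⟨rfl, rfl, funext fun v => ?_⟩
  by_cases hv : v ∈ A
  · ext b
    rw [hd.mem_iff_adj hv, hd'.mem_iff_adj hv, h]
  · rw [hd.eq_empty v hv, hd'.eq_empty v hv]

end IsSplitData

theorem exists_isSplitData_splitGraph_eq [Fintype V] (hG : IsSplit G)
    (hQ : G.IsClique (questioning G)) (h2 : 2 ≤ (questioning G).ncard) :
    ∃ Q A f, IsSplitData Q A f ∧ splitGraph Q A f = G := by
  classical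
  have hP := isSplitPartition_questioning_union_alwaysClique hG hQ
  set Q := (questioning G).toFinset
  set A := (alwaysClique G).toFinset
  have hK : (↑(Q ∪ A) : Set V) = questioning G ∪ alwaysClique G := by simp [Q, A]
  have hB : (↑(Q ∪ A) : Set V)ᶜ = alwaysIndep G := hK ▸ hP.isCompl.compl_eq
  refine ⟨Q, A, fun v => (alwaysIndep G ∩ G.neighborSet v).toFinset, ⟨?_, ?_, ?_, ?_, ?_⟩, ?_⟩
  · rwa [Set.ncard_eq_toFinset_card'] at h2
  · exact Set.disjoint_toFinset.2
      (Set.disjoint_left.2 fun _ => notMem_alwaysClique_of_mem_questioning)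
  · intro a _
    rw [← disjoint_coe, hK, Set.coe_toFinset]
    exact hP.1.symm.mono_left Set.inter_subset_left
  · intro a ha
    obtain ⟨b, hb, hab⟩ := exists_adj_mem_alwaysIndep hG hQ (Set.mem_toFinset.1 ha)
    exact ⟨b, Set.mem_toFinset.2 ⟨hb, hab⟩⟩
  · intro v hv
    refine Set.toFinset_eq_empty.2 (Set.eq_empty_of_forall_notMem fun b ⟨hb, hvb⟩ => ?_)
    rcases mem_questioning_or_alwaysClique_or_alwaysIndep (G := G) v with hvQ | hvA | hvB
    · exact not_adj_of_mem_questioning_of_mem_alwaysIndep hvQ hb hvb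
    · exact hv (Set.mem_toFinset.2 hvA)
    · exact hP.isIndep hvB hb hvb.ne hvb
  refine isSplitPartition_splitGraph.graph_eq (hB ▸ hK ▸ hP) fun u hu v hv => ?_
  rw [splitGraph_adj_of_notMem hv]
  rw [hB] at hv
  rw [hK] at hu
  refine ⟨fun ⟨_, huv⟩ => (Set.mem_toFinset.1 huv).2, fun huv => ⟨?_, Set.mem_toFinset.2 ⟨hv, huv⟩⟩⟩
  exact Set.mem_toFinset.2 <| hu.resolve_left fun huQ =>
    not_adj_of_mem_questioning_of_mem_alwaysIndep huQ hv huv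

end SplitData

lemma ncard_isSplit_two_le_ncard_questioning [Finite V] :
    {G : SimpleGraph V | IsSplit G ∧ 2 ≤ (questioning G).ncard}.ncard =
      2 * {G : SimpleGraph V | IsSplit G ∧ 2 ≤ (questioning G).ncard ∧
        G.IsClique (questioning G)}.ncard := by
  set S := {G : SimpleGraph V | IsSplit G ∧ 2 ≤ (questioning G).ncard ∧
    G.IsClique (questioning G)}
  have hS : {G : SimpleGraph V | IsSplit G ∧ 2 ≤ (questioning G).ncard} = S ∪ compl '' S := by
    rw [compl_involutive.image_eq_preimage_symm]
    ext G
    have hQ := isClique_or_isIndep_questioning G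
    simp only [S, Set.mem_union, Set.mem_ofPred_eq, Set.mem_preimage, isSplit_compl,
      questioning_compl, SimpleGraph.isClique_compl]
    tauto
  have hdisj : Disjoint S (compl '' S) := by
    rw [compl_involutive.image_eq_preimage_symm, Set.disjoint_left]
    rintro G ⟨-, h2, hQ⟩ ⟨-, -, hQ'⟩
    rw [questioning_compl] at hQ'
    obtain ⟨x, y, hx, hy, hxy⟩ := (Set.one_lt_ncard_iff (Set.toFinite _)).1 h2
    exact (hQ' hx hy hxy).2 (hQ hx hy hxy)
  rw [hS, Set.ncard_union_eq hdisj, Set.ncard_image_of_injective _ compl_injective, two_mul]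

lemma Finset.sum_powerset_filter_le_card {α β : Type*} [AddCommMonoid α] (s : Finset β) (k : ℕ)
    (g : ℕ → α) :
    ∑ t ∈ s.powerset with k ≤ #t, g #t = ∑ q ∈ Icc k #s, (#s).choose q • g q := by
  rw [sum_filter, sum_powerset_apply_card (fun m => if k ≤ m then g m else 0)]
  simp only [smul_ite, smul_zero]
  rw [← sum_filter]
  congr 1
  ext q
  simp only [mem_filter, mem_range, mem_Icc]
  omega

lemma card_piFinset_ite_powerset_erase [Fintype V] [DecidableEq V] (A s : Finset V) :
    #(Fintype.piFinset fun v => if v ∈ A then s.powerset.erase ∅ else {∅}) =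
      (2 ^ #s - 1) ^ #A := by
  rw [Fintype.card_piFinset]
  simp [apply_ite card, card_erase_of_mem, prod_ite_mem]

section Counting

abbrev SplitData (V : Type*) := Σ _ : Finset V, Σ _ : Finset V, V → Finset V

variable (V) [Fintype V] [DecidableEq V]

def splitDataFinset : Finset (SplitData V) :=
  ({Q | 2 ≤ #Q} : Finset (Finset V)).sigma fun Q => Qᶜ.powerset.sigma fun A =>
    Fintype.piFinset fun v => if v ∈ A then (Q ∪ A)ᶜ.powerset.erase ∅ else {∅}

variable {V}

lemma mem_splitDataFinset {d : SplitData V} :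
    d ∈ splitDataFinset V ↔ IsSplitData d.1 d.2.1 d.2.2 := by
  obtain ⟨Q, A, f⟩ := d
  have hf : ∀ v, f v ∈ (if v ∈ A then (Q ∪ A)ᶜ.powerset.erase ∅ else {∅}) ↔
      (v ∈ A → Disjoint (f v) (Q ∪ A) ∧ (f v).Nonempty) ∧ (v ∉ A → f v = ∅) := by
    intro v
    by_cases hv : v ∈ A <;>
      simp only [hv, ↓reduceIte, mem_erase, mem_powerset, subset_compl_iff_disjoint_right,
        nonempty_iff_ne_empty, mem_singleton, true_implies, not_true_eq_false, false_implies,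
        not_false_eq_true, true_and, ne_eq, and_comm]
  simp only [splitDataFinset, mem_sigma, mem_filter, mem_univ, true_and, mem_powerset,
    Fintype.mem_piFinset, subset_compl_iff_disjoint_left, hf, forall_and]
  exact ⟨fun ⟨hQ, hA, ⟨hd, hn⟩, h0⟩ => ⟨hQ, hA, hd, hn, h0⟩,
    fun ⟨hQ, hA, hd, hn, h0⟩ => ⟨hQ, hA, ⟨hd, hn⟩, h0⟩⟩

variable (V)

lemma card_splitDataFinset :
    #(splitDataFinset V) = ∑ q ∈ Icc 2 (Fintype.card V), ∑ c ∈ range (Fintype.card V - q + 1),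
      (Fintype.card V).choose q * (Fintype.card V - q).choose c *
        (2 ^ (Fintype.card V - c - q) - 1) ^ c := by
  set n := Fintype.card V with hn
  have hinner : ∀ Q : Finset V, #(Qᶜ.powerset.sigma fun A => Fintype.piFinset fun v =>
      if v ∈ A then (Q ∪ A)ᶜ.powerset.erase ∅ else {∅}) =
        ∑ c ∈ range (n - #Q + 1), (n - #Q).choose c * (2 ^ (n - c - #Q) - 1) ^ c := by
    intro Q
    rw [card_sigma, ← card_compl]
    simp only [← smul_eq_mul, ← sum_powerset_apply_card (fun c => (2 ^ (n - c - #Q) - 1) ^ c)]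
    refine sum_congr rfl fun A hA => ?_
    rw [card_piFinset_ite_powerset_erase, card_compl,
      card_union_of_disjoint (subset_compl_iff_disjoint_left.1 (mem_powerset.1 hA)), add_comm,
      Nat.sub_sub]
  have hQ : ({Q | 2 ≤ #Q} : Finset (Finset V)) = {Q ∈ (univ : Finset V).powerset | 2 ≤ #Q} := by
    rw [powerset_univ]
  rw [splitDataFinset, card_sigma, sum_congr rfl fun Q _ => hinner Q, hQ,
    sum_powerset_filter_le_card (univ : Finset V) 2 fun q =>
      ∑ c ∈ range (n - q + 1), (n - q).choose c * (2 ^ (n - c - q) - 1) ^ c, card_univ, ← hn]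
  simp only [smul_eq_mul, mul_sum, mul_assoc]

lemma ncard_isSplit_isClique_questioning :
    {G : SimpleGraph V | IsSplit G ∧ 2 ≤ (questioning G).ncard ∧
      G.IsClique (questioning G)}.ncard = #(splitDataFinset V) := by
  set φ := fun d : SplitData V => splitGraph d.1 d.2.1 d.2.2
  have hS : {G : SimpleGraph V | IsSplit G ∧ 2 ≤ (questioning G).ncard ∧
      G.IsClique (questioning G)} = φ '' ↑(splitDataFinset V) := by
    ext G
    constructor
    · rintro ⟨hG, h2, hQ⟩
      obtain ⟨Q, A, f, hd, rfl⟩ := exists_isSplitData_splitGraph_eq hG hQ h2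
      exact ⟨⟨Q, A, f⟩, mem_splitDataFinset.2 hd, rfl⟩
    · rintro ⟨⟨Q, A, f⟩, hd, rfl⟩
      have hd := mem_splitDataFinset.1 hd
      refine ⟨⟨_, _, isSplitPartition_splitGraph⟩, ?_, ?_⟩ <;> rw [hd.questioning_splitGraph]
      · rw [Set.ncard_coe_finset]
        exact hd.two_le_card
      · exact isSplitPartition_splitGraph.isClique.subset (coe_subset.2 subset_union_left)
  have hφ : Set.InjOn φ ↑(splitDataFinset V) := by
    rintro ⟨Q, A, f⟩ hd ⟨Q', A', f'⟩ hd' h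
    obtain ⟨rfl, rfl, rfl⟩ :=
      (mem_splitDataFinset.1 hd).eq_of_splitGraph_eq (mem_splitDataFinset.1 hd') h
    rfl
  rw [hS, hφ.ncard_image, Set.ncard_coe_finset]

end Counting

theorem count_split_questioning_ge_two_general (n : ℕ) :
    Set.ncard {G : SimpleGraph (Fin n) | IsSplit G ∧ 2 ≤ (questioning G).ncard} =
      2 * ∑ q ∈ Finset.Icc 2 n, ∑ c ∈ Finset.range (n - q + 1),
        Nat.choose n q * Nat.choose (n - q) c * (2 ^ (n - c - q) - 1) ^ c := by
  rw [ncard_isSplit_two_le_ncard_questioning, ncard_isSplit_isClique_questioning,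
    card_splitDataFinset, Fintype.card_fin]

/-- For every positive integer `n`, the number of split graphs with vertex
set `{1,…,n}` whose questioning set has size at least 2 equals
`2 · ∑_{q=2}^{n} ∑_{c=0}^{n−q} C(n,q) · C(n−q,c) · (2^{n−c−q} − 1)^c`
(with the convention `0^0 = 1`, as in `ℕ`). -/
theorem count_split_questioning_ge_two (n : ℕ) (hn : 1 ≤ n) :
    Set.ncard {G : SimpleGraph (Fin n) | IsSplit G ∧ 2 ≤ (questioning G).ncard} =
      2 * ∑ q ∈ Finset.Icc 2 n, ∑ c ∈ Finset.range (n - q + 1),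
        Nat.choose n q * Nat.choose (n - q) c * (2 ^ (n - c - q) - 1) ^ c :=
  count_split_questioning_ge_two_general n
end
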